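/- Let p be an odd prime and let i be a nonnegative integer. Then St^{(i,0)}(Q_{2,0}) = Q_{2,0}^p if i = p²−1; St^{(i,0)}(Q_{2,0}) = (−1)^k·C(k,r)·Q_{2,0}^{r+1}·Q_{2,1}^{k−r} if i = kp+r with integers 0 ≤ r ≤ k < p; and St^{(i,0)}(Q_{2,0}) = 0 otherwise. (Here C(k,r) denotes the binomial coefficient reduced mod p.) -/

import Mathlib

/-! Frobenius gives `L_{2,0} = L₂^p`, hence `Q_{2,0} = L₂^{p-1}`. At `t₂ = 0`,
`φ(L₂) = L₂ + L_{2,1} t^p + L_{2,0} t^{p+1} = L₂ (1 + t^p (Q_{2,0} t + Q_{2,1}))`, so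
`φ(Q_{2,0}) = Q_{2,0} (1 + t^p (Q_{2,0} t + Q_{2,1}))^{p-1}`. Since `C(p-1,k) ≡ (-1)^k` mod `p`,
this is `Q_{2,0} ∑_{k<p} (-1)^k t^{pk} (Q_{2,0} t + Q_{2,1})^k`, and the `k`-th summand only lives
in degrees `pk, …, pk + k`: the coefficient of `t^i` is read off from the base-`p` digits of `i`. -/

open MvPolynomial Finset

/-- The total Steenrod-Milnor operation `φ : R → R[t₁,t₂]`,
sending `y_k ↦ y_k + y_k^p t₁ + y_k^{p²} t₂`. Here `R = F_p[y₁,y₂]`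
and `R[t₁,t₂]` is modelled as `MvPolynomial (Fin 2) R`. -/
noncomputable def phi (p : ℕ) :
    MvPolynomial (Fin 2) (ZMod p) →ₐ[ZMod p]
      MvPolynomial (Fin 2) (MvPolynomial (Fin 2) (ZMod p)) :=
  aeval (fun k => C (X k) + C (X k ^ p) * X 0 + C (X k ^ (p ^ 2)) * X 1)

/-- The Steenrod-Milnor operation `St^{(i,j)}` : the coefficient of
`t₁^i t₂^j` in `φ f`. -/
noncomputable def St (p i j : ℕ) (f : MvPolynomial (Fin 2) (ZMod p)) :
    MvPolynomial (Fin 2) (ZMod p) :=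
  coeff (Finsupp.single (0 : Fin 2) i + Finsupp.single (1 : Fin 2) j) (phi p f)

/-- `L₂ = y₁ y₂^p - y₁^p y₂`. -/
noncomputable def L2 (p : ℕ) : MvPolynomial (Fin 2) (ZMod p) :=
  X 0 * X 1 ^ p - X 0 ^ p * X 1

/-- `L_{2,0} = y₁^p y₂^{p²} - y₁^{p²} y₂^p`. -/
noncomputable def L20 (p : ℕ) : MvPolynomial (Fin 2) (ZMod p) :=
  X 0 ^ p * X 1 ^ (p ^ 2) - X 0 ^ (p ^ 2) * X 1 ^ p

/-- `L_{2,1} = y₁ y₂^{p²} - y₁^{p²} y₂`. -/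
noncomputable def L21 (p : ℕ) : MvPolynomial (Fin 2) (ZMod p) :=
  X 0 * X 1 ^ (p ^ 2) - X 0 ^ (p ^ 2) * X 1

namespace Polynomial

variable {R : Type*}

theorem coeff_C_mul_X_add_C_pow [CommSemiring R] (a b : R) (n k : ℕ) :
    ((C a * X + C b) ^ n).coeff k = a ^ k * b ^ (n - k) * n.choose k := by
  have hterm : ∀ m, (C a * X) ^ m * C b ^ (n - m) * (n.choose m : R[X]) =
      C (a ^ m * b ^ (n - m) * n.choose m) * X ^ m := by
    intro m
    simp only [map_mul, map_pow, map_natCast]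
    ring
  simp_rw [add_pow, finsetSum_coeff, hterm, coeff_C_mul_X_pow]
  rw [sum_ite_eq, ite_eq_left_iff, mem_range, not_lt]
  intro hnk
  rw [Nat.choose_eq_zero_of_lt (by omega), Nat.cast_zero, mul_zero]

theorem coeff_sum_X_pow_mul_add [Semiring R] {p n q s : ℕ} {f : ℕ → R[X]}
    (hf : ∀ k < n, (f k).natDegree < p) (hs : s < p) :
    (∑ k ∈ range n, X ^ (p * k) * f k).coeff (p * q + s) =
      if q < n then (f q).coeff s else 0 := by
  have hterm : ∀ k ∈ range n,
      (X ^ (p * k) * f k).coeff (p * q + s) = if q = k then (f q).coeff s else 0 := by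
    intro k hk
    rw [coeff_X_pow_mul']
    rcases lt_trichotomy k q with hkq | rfl | hqk
    · have : p * k + p ≤ p * q := by nlinarith
      rw [if_pos (by omega), if_neg hkq.ne', coeff_eq_zero_of_natDegree_lt (by grind)]
    · simp
    · have : p * q + p ≤ p * k := by nlinarith
      rw [if_neg (by omega), if_neg hqk.ne]
  rw [finsetSum_coeff, sum_congr rfl hterm, sum_ite_eq]
  simp only [mem_range]

end Polynomial

theorem CharP.cast_choose_pred_eq_neg_one_pow {R : Type*} [CommRing R] {p : ℕ} [CharP R p]
    (hp : p.Prime) {k : ℕ} (hk : k < p) : ((p - 1).choose k : R) = (-1) ^ k := by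
  induction k with
  | zero => simp
  | succ k ih =>
    have hpascal : (p - 1).choose k + (p - 1).choose (k + 1) = p.choose (k + 1) := by
      conv_rhs => rw [← Nat.sub_one_add_one hp.ne_zero, Nat.choose_succ_succ]
    have hvanish : (p.choose (k + 1) : R) = 0 :=
      (CharP.cast_eq_zero_iff R p _).mpr (hp.dvd_choose_self k.succ_ne_zero hk)
    have := congrArg (Nat.cast : ℕ → R) hpascal
    push_cast at this
    rw [ih (by omega), hvanish] at this
    linear_combination this

theorem CharP.one_add_pow_pred_eq_sum {R : Type*} [CommRing R] {p : ℕ} [CharP R p]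
    (hp : p.Prime) (u : R) : (1 + u) ^ (p - 1) = ∑ k ∈ range p, (-1) ^ k * u ^ k := by
  rw [add_comm, add_pow, Nat.sub_one_add_one hp.ne_zero]
  refine sum_congr rfl fun k hk => ?_
  rw [one_pow, mul_one, cast_choose_pred_eq_neg_one_pow hp (mem_range.mp hk), mul_comm]

theorem MvPolynomial.coeff_single_zero_eq_coeff_aeval {R : Type*} [CommSemiring R]
    (g : MvPolynomial (Fin 2) R) (i : ℕ) :
    g.coeff (Finsupp.single 0 i) = (aeval ![Polynomial.X, 0] g).coeff i := by
  induction g using MvPolynomial.induction_on' with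
  | monomial m a =>
    by_cases h1 : m 1 = 0 <;>
      simp [aeval_monomial, Finsupp.prod_fintype, coeff_monomial, h1, Polynomial.coeff_C_mul,
        Polynomial.coeff_X_pow, Finsupp.ext_iff, Fin.forall_fin_two, eq_comm]
  | add f g hf hg => simp [hf, hg]

/-- `φ` with `t₂ = 0`, the remaining variable `t₁` becoming the variable of `R[X]`. -/
noncomputable def phi₁ (p : ℕ) :
    MvPolynomial (Fin 2) (ZMod p) →ₐ[ZMod p] Polynomial (MvPolynomial (Fin 2) (ZMod p)) :=
  aeval fun k => Polynomial.C (X k) + Polynomial.C (X k ^ p) * Polynomial.X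

theorem St_zero_eq_coeff_phi₁ (p i : ℕ) (f : MvPolynomial (Fin 2) (ZMod p)) :
    St p i 0 f = (phi₁ p f).coeff i := by
  have hcomp : ((aeval ![Polynomial.X, 0]).restrictScalars (ZMod p)).comp (phi p) = phi₁ p := by
    ext k : 1
    simp [phi, phi₁]
  rw [St, Finsupp.single_zero, add_zero, coeff_single_zero_eq_coeff_aeval, ← hcomp]
  rfl

@[simp]
theorem phi₁_X (p : ℕ) (k : Fin 2) :
    phi₁ p (X k) = Polynomial.C (X k) + Polynomial.C (X k ^ p) * Polynomial.X :=
  aeval_X _ _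

section Dickson

variable (p : ℕ) [Fact p.Prime]

theorem L2_pow_char : L2 p ^ p = L20 p := by
  rw [L2, L20, sub_pow_char, mul_pow, mul_pow, ← pow_mul, ← pow_mul, ← sq]

theorem L2_ne_zero : L2 p ≠ 0 := by
  intro h
  have := congrArg (aeval ![(1 : Polynomial (ZMod p)), Polynomial.X]) h
  simp [L2] at this
  exact FiniteField.X_pow_card_sub_X_ne_zero (ZMod p) (Fact.out : p.Prime).one_lt this

theorem eq_L2_pow_of_mul_L2_eq_L20 {Q0 : MvPolynomial (Fin 2) (ZMod p)} (hQ0 : Q0 * L2 p = L20 p) :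
    Q0 = L2 p ^ (p - 1) := by
  apply mul_right_cancel₀ (L2_ne_zero p)
  rw [hQ0, ← pow_succ, Nat.sub_one_add_one (Fact.out : p.Prime).ne_zero, L2_pow_char]

theorem phi₁_L2 : phi₁ p (L2 p) = Polynomial.C (L2 p) + Polynomial.C (L21 p) * Polynomial.X ^ p
      + Polynomial.C (L20 p) * Polynomial.X ^ (p + 1) := by
  have frob : ∀ y : Polynomial (MvPolynomial (Fin 2) (ZMod p)),
      (y + y ^ p * Polynomial.X) ^ p = y ^ p + y ^ p ^ 2 * Polynomial.X ^ p := fun y => by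
    rw [add_pow_char, mul_pow, ← pow_mul, ← sq]
  rw [L2]
  simp only [map_sub, map_mul, map_pow, phi₁_X]
  rw [frob, frob]
  simp only [L21, L20, Polynomial.C_mul, Polynomial.C_pow, Polynomial.C_sub]
  ring

theorem phi₁_Q20 {Q0 Q1 : MvPolynomial (Fin 2) (ZMod p)}
    (hQ0 : Q0 * L2 p = L20 p) (hQ1 : Q1 * L2 p = L21 p) :
    phi₁ p Q0 = Polynomial.C Q0 *
      (1 + Polynomial.X ^ p * (Polynomial.C Q0 * Polynomial.X + Polynomial.C Q1)) ^ (p - 1) := by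
  have hfactor : phi₁ p (L2 p) = Polynomial.C (L2 p) *
      (1 + Polynomial.X ^ p * (Polynomial.C Q0 * Polynomial.X + Polynomial.C Q1)) := by
    rw [phi₁_L2, ← hQ0, ← hQ1, Polynomial.C_mul, Polynomial.C_mul]
    ring
  conv_lhs => rw [eq_L2_pow_of_mul_L2_eq_L20 p hQ0, map_pow, hfactor, mul_pow, ← Polynomial.C_pow,
    ← eq_L2_pow_of_mul_L2_eq_L20 p hQ0]

end Dickson

theorem St_mul_add_zero_Q20 {p : ℕ} [Fact p.Prime] {Q0 Q1 : MvPolynomial (Fin 2) (ZMod p)}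
    (hQ0 : Q0 * L2 p = L20 p) (hQ1 : Q1 * L2 p = L21 p) {q s : ℕ} (hs : s < p) :
    St p (p * q + s) 0 Q0 =
      if q < p then
        (-1) ^ q * (q.choose s : MvPolynomial (Fin 2) (ZMod p)) * Q0 ^ (s + 1) * Q1 ^ (q - s)
      else 0 := by
  set g := Polynomial.C Q0 * Polynomial.X + Polynomial.C Q1
  have hexpand : (1 + Polynomial.X ^ p * g) ^ (p - 1) =
      ∑ k ∈ range p, Polynomial.X ^ (p * k) * (Polynomial.C ((-1) ^ k) * g ^ k) := by
    rw [CharP.one_add_pow_pred_eq_sum (Fact.out : p.Prime)]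
    refine sum_congr rfl fun k _ => ?_
    rw [Polynomial.C_pow, Polynomial.C_neg, Polynomial.C_1, mul_pow, pow_mul]
    ring
  have hdeg : ∀ k < p, (Polynomial.C ((-1) ^ k) * g ^ k).natDegree < p := fun k hk =>
    (Polynomial.natDegree_C_mul_le _ _).trans_lt
      ((Polynomial.natDegree_pow_le_of_le k Polynomial.natDegree_linear_le).trans_lt (by omega))
  rw [St_zero_eq_coeff_phi₁, phi₁_Q20 p hQ0 hQ1, Polynomial.coeff_C_mul, hexpand,
    Polynomial.coeff_sum_X_pow_mul_add hdeg hs]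
  split_ifs
  · rw [Polynomial.coeff_C_mul, Polynomial.coeff_C_mul_X_add_C_pow]
    ring
  · rw [mul_zero]

theorem st_i0_Q20_general (p : ℕ) (hp : p.Prime)
    (Q0 Q1 : MvPolynomial (Fin 2) (ZMod p))
    (hQ0 : Q0 * L2 p = L20 p) (hQ1 : Q1 * L2 p = L21 p)
    (i : ℕ) :
    (i = p ^ 2 - 1 → St p i 0 Q0 = Q0 ^ p) ∧
    (∀ k r : ℕ, r ≤ k → k < p → i = k * p + r →
      St p i 0 Q0 = (-1 : MvPolynomial (Fin 2) (ZMod p)) ^ k *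
        C ((k.choose r : ZMod p)) * Q0 ^ (r + 1) * Q1 ^ (k - r)) ∧
    ((i ≠ p ^ 2 - 1 ∧ ∀ k r : ℕ, r ≤ k → k < p → i ≠ k * p + r) →
      St p i 0 Q0 = 0) := by
  have : Fact p.Prime := ⟨hp⟩
  have hdigits : ∀ k r : ℕ, r ≤ k → k < p → i = k * p + r →
      St p i 0 Q0 = (-1 : MvPolynomial (Fin 2) (ZMod p)) ^ k *
        C ((k.choose r : ZMod p)) * Q0 ^ (r + 1) * Q1 ^ (k - r) := by
    rintro k r hrk hk rfl
    rw [mul_comm k, St_mul_add_zero_Q20 hQ0 hQ1 (by omega), if_pos hk, map_natCast]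
  refine ⟨fun hi => ?_, hdigits, fun ⟨_, hi⟩ => ?_⟩
  · have hp1 := hp.one_le
    have hi' : i = (p - 1) * p + (p - 1) := by
      rw [hi]
      zify [hp1, Nat.one_le_pow 2 p hp.pos]
      ring
    have hsign : (-1 : MvPolynomial (Fin 2) (ZMod p)) ^ (p - 1) = 1 := by
      rw [← CharP.cast_choose_pred_eq_neg_one_pow hp (by omega), Nat.choose_self, Nat.cast_one]
    rw [hdigits (p - 1) (p - 1) le_rfl (by omega) hi', hsign, Nat.choose_self, Nat.cast_one,
      map_one, Nat.sub_self, Nat.sub_one_add_one hp.ne_zero]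
    ring
  · rw [← Nat.div_add_mod i p, St_mul_add_zero_Q20 hQ0 hQ1 (Nat.mod_lt i hp.pos)]
    split_ifs with hq
    · have hlt : i / p < i % p := by
        by_contra! hle
        exact hi _ _ hle hq (by rw [mul_comm, Nat.div_add_mod])
      rw [Nat.choose_eq_zero_of_lt hlt, Nat.cast_zero, mul_zero, zero_mul, zero_mul]
    · rfl

theorem st_i0_Q20 (p : ℕ) (hp : p.Prime) (hodd : Odd p)
    (Q0 Q1 : MvPolynomial (Fin 2) (ZMod p))
    (hQ0 : Q0 * L2 p = L20 p) (hQ1 : Q1 * L2 p = L21 p)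
    (i : ℕ) :
    (i = p ^ 2 - 1 → St p i 0 Q0 = Q0 ^ p) ∧
    (∀ k r : ℕ, r ≤ k → k < p → i = k * p + r →
      St p i 0 Q0 = (-1 : MvPolynomial (Fin 2) (ZMod p)) ^ k *
        C ((k.choose r : ZMod p)) * Q0 ^ (r + 1) * Q1 ^ (k - r)) ∧
    ((i ≠ p ^ 2 - 1 ∧ ∀ k r : ℕ, r ≤ k → k < p → i ≠ k * p + r) →
      St p i 0 Q0 = 0) :=
  st_i0_Q20_general p hp Q0 Q1 hQ0 hQ1 i
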